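/- arXiv:1005.2296 — 6 statements merged into one kernel-verified Lean document; each statement's English description precedes it below -/
import Mathlib

section
/- Fix p > 1 and let f : ℝ → ℝ be given by a power series f(a) = Σ_{n=0}^∞ γ_n a^n, with f₊(a) := Σ_{n=0}^∞ |γ_n| a^n. On a probability space, let N be a random variable taking values in the nonnegative integers with P(N = n) = (p−1)/p^{n+1} for every n ∈ ℕ, let (X_j)_{j≥1} be i.i.d. real random variables independent of N, and suppose E[X_1²] ≤ m for some m ≥ 0 with f₊(√(p·m)) < ∞. Define θ := γ_N · (p^{N+1}/(p−1)) · ∏_{j=1}^N X_j (so θ = γ_0·p/(p−1) when N = 0). Then θ is integrable and E[θ] = f(E[X_1]). -/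
/-!
Split Ω along the fibres {N = n}. On {N = n} the estimator is γₙ pⁿ⁺¹/(p - 1) · X₀ ⋯ Xₙ₋₁, and
since N is independent of the X's its integral there is
P(N = n) · γₙ pⁿ⁺¹/(p - 1) · E[X₀]ⁿ = γₙ E[X₀]ⁿ: the weight exactly cancels the geometric mass.
Summing over n gives f(E[X₀]). The same computation for |θ| gives Σ |γₙ| E[|X₀|]ⁿ, which is
finite because E[|X₀|] ≤ √E[X₀²] ≤ √(p m).
-/

open MeasureTheory ProbabilityTheory

section Fibers

variable {Ω ι E : Type*} [MeasurableSpace Ω] {μ : Measure Ω} [Countable ι] [MeasurableSpace ι]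
  [MeasurableSingletonClass ι] [NormedAddCommGroup E] {N : Ω → ι} {F : ι → Ω → E}

lemma integrable_of_summable_integral_norm_fiber (hN : Measurable N)
    (hF : ∀ i, IntegrableOn (F i) {ω | N ω = i} μ)
    (hsum : Summable fun i => ∫ ω in {ω | N ω = i}, ‖F i ω‖ ∂μ) :
    Integrable (fun ω => F (N ω) ω) μ := by
  have hfib (i : ι) : MeasurableSet {ω | N ω = i} := hN (measurableSet_singleton i)
  have heq (i : ι) : Set.EqOn (fun ω => F (N ω) ω) (F i) {ω | N ω = i} :=
    fun ω (hω : N ω = i) => by simp only [hω]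
  have hcover : (⋃ i, {ω | N ω = i}) = Set.univ := by ext; simp
  rw [← integrableOn_univ, ← hcover]
  refine integrableOn_iUnion_of_summable_integral_norm
    (fun i => (hF i).congr_fun (heq i).symm (hfib i)) ?_
  convert hsum using 2 with i
  exact setIntegral_congr_fun (hfib i) fun ω hω => congrArg norm (heq i hω)

lemma hasSum_setIntegral_fiber [NormedSpace ℝ E] (hN : Measurable N)
    (hint : Integrable (fun ω => F (N ω) ω) μ) :
    HasSum (fun i => ∫ ω in {ω | N ω = i}, F i ω ∂μ) (∫ ω, F (N ω) ω ∂μ) := by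
  have hfib (i : ι) : MeasurableSet {ω | N ω = i} := hN (measurableSet_singleton i)
  have heq (i : ι) : Set.EqOn (fun ω => F (N ω) ω) (F i) {ω | N ω = i} :=
    fun ω (hω : N ω = i) => by simp only [hω]
  have hcover : (⋃ i, {ω | N ω = i}) = Set.univ := by ext; simp
  have hdisj : Pairwise (Function.onFun Disjoint fun i => {ω | N ω = i}) :=
    fun i j hij => Set.disjoint_left.2 fun ω hi hj => hij (hi.symm.trans hj)
  have h := hasSum_integral_iUnion hfib hdisj (by rw [hcover]; exact hint.integrableOn)
  rw [hcover, setIntegral_univ] at h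
  convert h using 2 with i
  exact (setIntegral_congr_fun (hfib i) (heq i)).symm

end Fibers

lemma ProbabilityTheory.IndepFun.setIntegral_preimage_eq_mul {Ω ι β : Type*} [MeasurableSpace Ω]
    {μ : Measure Ω} [MeasurableSpace ι] [MeasurableSpace β] {N : Ω → ι} {V : Ω → β}
    (hNV : IndepFun N V μ) (hN : Measurable N) (hV : AEMeasurable V μ) {s : Set ι}
    (hs : MeasurableSet s) {g : β → ℝ} (hg : AEStronglyMeasurable g (μ.map V)) :
    ∫ ω in N ⁻¹' s, g (V ω) ∂μ = μ.real (N ⁻¹' s) * ∫ ω, g (V ω) ∂μ :=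
  Indep.setIntegral_eq_mul hN.comap_le ((IndepFun_iff_Indep N V μ).1 hNV) hV ⟨s, hs, rfl⟩ hg

section Products

variable {Ω ι : Type*} [MeasurableSpace Ω] {μ : Measure Ω} {X : ι → Ω → ℝ}

lemma ProbabilityTheory.iIndepFun.integral_finset_prod (hX : iIndepFun X μ)
    (hXm : ∀ i, AEStronglyMeasurable (X i) μ) (s : Finset ι) :
    ∫ ω, ∏ i ∈ s, X i ω ∂μ = ∏ i ∈ s, ∫ ω, X i ω ∂μ := by
  have hXs := hX.precomp (g := ((↑) : s → ι)) Subtype.val_injective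
  calc ∫ ω, ∏ i ∈ s, X i ω ∂μ = ∫ ω, ∏ i : s, X i ω ∂μ := by
        congr 1 with ω
        exact (Finset.prod_coe_sort s fun i => X i ω).symm
    _ = ∏ i : s, ∫ ω, X i ω ∂μ := hXs.integral_fun_prod_eq_prod_integral fun i => hXm i
    _ = ∏ i ∈ s, ∫ ω, X i ω ∂μ := Finset.prod_coe_sort s fun i => ∫ ω, X i ω ∂μ

lemma ProbabilityTheory.iIndepFun.integrable_finset_prod (hX : iIndepFun X μ)
    (hXm : ∀ i, Measurable (X i)) (s : Finset ι) (hint : ∀ i ∈ s, Integrable (X i) μ) :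
    Integrable (fun ω => ∏ i ∈ s, X i ω) μ := by
  classical
  induction s using Finset.induction_on with
  | empty => have := hX.isProbabilityMeasure; simp
  | insert i s hi ih =>
    simp only [Finset.prod_insert hi]
    have hprod := ih fun j hj => hint j (Finset.mem_insert_of_mem hj)
    rw [← Finset.prod_fn] at hprod
    have := (hX.indepFun_finsetProd_of_notMem hXm hi).integrable_mul hprod
      (hint i (Finset.mem_insert_self i s))
    convert this using 1
    ext ω
    simp [mul_comm]

lemma ProbabilityTheory.iIndepFun.integral_finset_prod_eq_pow {Y : Ω → ℝ} (hX : iIndepFun X μ)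
    (hid : ∀ i, IdentDistrib (X i) Y μ μ) (s : Finset ι) :
    ∫ ω, ∏ i ∈ s, X i ω ∂μ = (∫ ω, Y ω ∂μ) ^ s.card := by
  rw [hX.integral_finset_prod (fun i => (hid i).aemeasurable_fst.aestronglyMeasurable),
    Finset.prod_congr rfl fun i _ => (hid i).integral_eq, Finset.prod_const]

end Products

lemma integral_abs_le_sqrt_integral_sq {Ω : Type*} [MeasurableSpace Ω] {μ : Measure Ω}
    [IsProbabilityMeasure μ] {Y : Ω → ℝ} (hY : MemLp Y 2 μ) :
    ∫ ω, |Y ω| ∂μ ≤ √(∫ ω, Y ω ^ 2 ∂μ) := by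
  have hvar := variance_nonneg |Y| μ
  rw [variance_eq_sub hY.abs] at hvar
  simp only [Pi.pow_apply, Pi.abs_apply, sq_abs] at hvar
  exact Real.le_sqrt_of_sq_le (by linarith)

lemma summable_mul_integral_abs_pow {Ω : Type*} [MeasurableSpace Ω] {μ : Measure Ω}
    [IsProbabilityMeasure μ] {Y : Ω → ℝ} (hY : MemLp Y 2 μ) {γ : ℕ → ℝ} {r : ℝ}
    (hr : √(∫ ω, Y ω ^ 2 ∂μ) ≤ r) (hγ : Summable fun n => |γ n| * r ^ n) :
    Summable fun n => |γ n| * (∫ ω, |Y ω| ∂μ) ^ n := by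
  have hb : 0 ≤ ∫ ω, |Y ω| ∂μ := integral_nonneg fun _ => abs_nonneg _
  refine hγ.of_nonneg_of_le (fun n => by positivity) fun n => ?_
  gcongr
  exact (integral_abs_le_sqrt_integral_sq hY).trans hr

lemma ProbabilityTheory.IndepFun.setIntegral_fiber_const_mul_prod {Ω ι κ : Type*}
    [MeasurableSpace Ω] {μ : Measure Ω} [MeasurableSpace ι] [MeasurableSingletonClass ι]
    {N : Ω → ι} {X : κ → Ω → ℝ} {Y : Ω → ℝ} (hNX : IndepFun N (fun ω j => X j ω) μ)
    (hN : Measurable N) (hXm : ∀ j, Measurable (X j)) (hX : iIndepFun X μ)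
    (hid : ∀ j, IdentDistrib (X j) Y μ μ) (i : ι) (c : ℝ) (s : Finset κ) :
    ∫ ω in {ω | N ω = i}, c * ∏ j ∈ s, X j ω ∂μ
      = μ.real {ω | N ω = i} * (c * (∫ ω, Y ω ∂μ) ^ s.card) := by
  rw [← hX.integral_finset_prod_eq_pow hid, ← integral_const_mul]
  exact hNX.setIntegral_preimage_eq_mul hN (measurable_pi_lambda _ hXm).aemeasurable
    (measurableSet_singleton i) (g := fun v => c * ∏ j ∈ s, v j)
    (Measurable.aestronglyMeasurable (by fun_prop))

lemma ProbabilityTheory.IndepFun.setIntegral_fiber_norm_const_mul_prod {Ω ι κ : Type*}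
    [MeasurableSpace Ω] {μ : Measure Ω} [MeasurableSpace ι] [MeasurableSingletonClass ι]
    {N : Ω → ι} {X : κ → Ω → ℝ} {Y : Ω → ℝ} (hNX : IndepFun N (fun ω j => X j ω) μ)
    (hN : Measurable N) (hXm : ∀ j, Measurable (X j)) (hX : iIndepFun X μ)
    (hid : ∀ j, IdentDistrib (X j) Y μ μ) (i : ι) (c : ℝ) (s : Finset κ) :
    ∫ ω in {ω | N ω = i}, ‖c * ∏ j ∈ s, X j ω‖ ∂μ
      = μ.real {ω | N ω = i} * (|c| * (∫ ω, |Y ω| ∂μ) ^ s.card) := by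
  have hNXabs : IndepFun N (fun ω j => |X j ω|) μ :=
    hNX.comp measurable_id (show Measurable fun (v : κ → ℝ) j => |v j| by fun_prop)
  have hidabs (j : κ) : IdentDistrib (fun ω => |X j ω|) (fun ω => |Y ω|) μ μ :=
    (hid j).comp measurable_abs
  simp only [norm_mul, Real.norm_eq_abs, Finset.abs_prod]
  exact hNXabs.setIntegral_fiber_const_mul_prod hN (fun j => (hXm j).abs)
    (hX.comp (fun _ => abs) fun _ => measurable_abs) hidabs i |c| s

lemma geometric_mass_mul_inverse_mass {p : ℝ} (hp : 1 < p) (n : ℕ) (x y : ℝ) :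
    (p - 1) / p ^ (n + 1) * (x * (p ^ (n + 1) / (p - 1)) * y) = x * y := by
  have : p - 1 ≠ 0 := by linarith
  field_simp

theorem unbiased_estimator_of_f_of_mean_general
    {Ω : Type*} [MeasurableSpace Ω] (μ : Measure Ω) [IsProbabilityMeasure μ]
    (p : ℝ) (hp : 1 < p)
    (f : ℝ → ℝ) (γ : ℕ → ℝ) (hf : ∀ a : ℝ, f a = ∑' n : ℕ, γ n * a ^ n)
    (N : Ω → ℕ) (hN : Measurable N)
    (hNdist : ∀ n : ℕ, μ {ω | N ω = n} = ENNReal.ofReal ((p - 1) / p ^ (n + 1)))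
    (X : ℕ → Ω → ℝ) (hXm : ∀ j, Measurable (X j))
    (hXindep : iIndepFun X μ)
    (hXid : ∀ j, μ.map (X j) = μ.map (X 0))
    (hNX : IndepFun N (fun ω => fun j => X j ω) μ)
    (m : ℝ)
    (hXsq : Integrable (fun ω => (X 0 ω) ^ 2) μ)
    (hX2 : ∫ ω, (X 0 ω) ^ 2 ∂μ ≤ m)
    (hfplus : Summable (fun n : ℕ => |γ n| * Real.sqrt (p * m) ^ n)) :
    Integrable (fun ω =>
      γ (N ω) * (p ^ (N ω + 1) / (p - 1)) * ∏ j ∈ Finset.range (N ω), X j ω) μ ∧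
    ∫ ω, γ (N ω) * (p ^ (N ω + 1) / (p - 1)) * ∏ j ∈ Finset.range (N ω), X j ω ∂μ
      = f (∫ ω, X 0 ω ∂μ) := by
  have hid (j : ℕ) : IdentDistrib (X j) (X 0) μ μ :=
    ⟨(hXm j).aemeasurable, (hXm 0).aemeasurable, hXid j⟩
  have hX0 : MemLp (X 0) 2 μ :=
    (memLp_two_iff_integrable_sq (hXm 0).aestronglyMeasurable).2 hXsq
  have hP (n : ℕ) : μ.real {ω | N ω = n} = (p - 1) / p ^ (n + 1) := by
    rw [measureReal_def, hNdist, ENNReal.toReal_ofReal (div_nonneg (by linarith) (by positivity))]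
  have hmean (n : ℕ) : ∫ ω in {ω | N ω = n},
      γ n * (p ^ (n + 1) / (p - 1)) * ∏ j ∈ Finset.range n, X j ω ∂μ
        = γ n * (∫ ω, X 0 ω ∂μ) ^ n := by
    rw [hNX.setIntegral_fiber_const_mul_prod hN hXm hXindep hid, hP, Finset.card_range,
      geometric_mass_mul_inverse_mass hp]
  have habs (n : ℕ) : ∫ ω in {ω | N ω = n},
      ‖γ n * (p ^ (n + 1) / (p - 1)) * ∏ j ∈ Finset.range n, X j ω‖ ∂μ
        = |γ n| * (∫ ω, |X 0 ω| ∂μ) ^ n := by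
    have hw : 0 < p ^ (n + 1) / (p - 1) := div_pos (by positivity) (by linarith)
    rw [hNX.setIntegral_fiber_norm_const_mul_prod hN hXm hXindep hid, hP, Finset.card_range,
      abs_mul, abs_of_pos hw, geometric_mass_mul_inverse_mass hp]
  have hsum : Summable fun n => |γ n| * (∫ ω, |X 0 ω| ∂μ) ^ n := by
    refine summable_mul_integral_abs_pow hX0 (Real.sqrt_le_sqrt ?_) hfplus
    have : 0 ≤ ∫ ω, X 0 ω ^ 2 ∂μ := integral_nonneg fun ω => sq_nonneg _
    nlinarith
  have hint (j : ℕ) : Integrable (X j) μ := (hid j).integrable_iff.2 (hX0.integrable one_le_two)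
  have hθ := integrable_of_summable_integral_norm_fiber hN
    (fun n => ((hXindep.integrable_finset_prod hXm (Finset.range n) fun j _ => hint j).const_mul
      (γ n * (p ^ (n + 1) / (p - 1)))).integrableOn)
    (by simpa only [habs] using hsum)
  refine ⟨hθ, ?_⟩
  rw [hf, ← tsum_congr hmean]
  exact Eq.symm (HasSum.tsum_eq (hasSum_setIntegral_fiber hN hθ))

/-- **Lemma 1 (unbiasedness).** Fix `p > 1` and let `f(a) = Σ γ_n aⁿ`.
Let `N` be geometric with parameter `p` (i.e. `P(N = n) = (p-1)/p^(n+1)`), let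
`(X_j)` be i.i.d. real random variables independent of `N` with `E[X₁²] ≤ m`, and
suppose `f₊(√(p·m)) = Σ |γ_n| √(p·m)ⁿ < ∞`. Then the estimator
`θ = γ_N · (p^(N+1)/(p-1)) · ∏_{j=1}^N X_j` is integrable and `E[θ] = f(E[X₁])`. -/
theorem unbiased_estimator_of_f_of_mean
    {Ω : Type*} [MeasurableSpace Ω] (μ : Measure Ω) [IsProbabilityMeasure μ]
    (p : ℝ) (hp : 1 < p)
    (f : ℝ → ℝ) (γ : ℕ → ℝ) (hf : ∀ a : ℝ, f a = ∑' n : ℕ, γ n * a ^ n)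
    (N : Ω → ℕ) (hN : Measurable N)
    (hNdist : ∀ n : ℕ, μ {ω | N ω = n} = ENNReal.ofReal ((p - 1) / p ^ (n + 1)))
    (X : ℕ → Ω → ℝ) (hXm : ∀ j, Measurable (X j))
    (hXindep : iIndepFun X μ)
    (hXid : ∀ j, μ.map (X j) = μ.map (X 0))
    (hNX : IndepFun N (fun ω => fun j => X j ω) μ)
    (m : ℝ) (hm : 0 ≤ m)
    (hXsq : Integrable (fun ω => (X 0 ω) ^ 2) μ)
    (hX2 : ∫ ω, (X 0 ω) ^ 2 ∂μ ≤ m)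
    (hfplus : Summable (fun n : ℕ => |γ n| * Real.sqrt (p * m) ^ n)) :
    Integrable (fun ω =>
      γ (N ω) * (p ^ (N ω + 1) / (p - 1)) * ∏ j ∈ Finset.range (N ω), X j ω) μ ∧
    ∫ ω, γ (N ω) * (p ^ (N ω + 1) / (p - 1)) * ∏ j ∈ Finset.range (N ω), X j ω ∂μ
      = f (∫ ω, X 0 ω ∂μ) :=
  unbiased_estimator_of_f_of_mean_general μ p hp f γ hf N hN hNdist X hXm hXindep hXid hNX m hXsq
    hX2 hfplus
end

section
/- Fix p > 1 and let f : ℝ → ℝ be given by a power series f(a) = Σ_{n=0}^∞ γ_n a^n, with f₊(a) := Σ_{n=0}^∞ |γ_n| a^n. On a probability space, let N be a random variable taking values in the nonnegative integers with P(N = n) = (p−1)/p^{n+1} for every n ∈ ℕ, let (X_j)_{j≥1} be i.i.d. square-integrable real random variables independent of N, and suppose f₊(√(p·E[X_1²])) < ∞. Define θ := γ_N · (p^{N+1}/(p−1)) · ∏_{j=1}^N X_j (so θ = γ_0·p/(p−1) when N = 0). Then E[θ²] ≤ (p/(p−1)) · f₊(√(p·E[X_1²]))². -/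
open MeasureTheory ProbabilityTheory
open scoped ENNReal

/-!
Condition on `N`. On `{N = n}` the estimator is `γₙ pⁿ⁺¹/(p-1) ∏_{j<n} X_j`, and since `N` is
independent of the i.i.d. `X_j`, its conditional second moment is `γₙ² (pⁿ⁺¹/(p-1))² E[X₀²]ⁿ`.
Weighting by `P(N = n) = (p-1)/pⁿ⁺¹` gives `E[θ²] = p/(p-1) · Σ aₙ²` with
`aₙ = |γₙ| √(p E[X₀²])ⁿ`, and `Σ aₙ² ≤ (Σ aₙ)²` since the `aₙ` are nonnegative.
-/

theorem ENNReal.tsum_sq_le_sq_tsum {α : Type*} (f : α → ℝ≥0∞) :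
    ∑' a, f a ^ 2 ≤ (∑' a, f a) ^ 2 :=
  calc ∑' a, f a ^ 2 ≤ ∑' a, f a * ∑' b, f b :=
        ENNReal.tsum_le_tsum fun a => by rw [sq]; gcongr; exact ENNReal.le_tsum a
    _ = (∑' a, f a) ^ 2 := by rw [ENNReal.tsum_mul_right, sq]

section

variable {Ω : Type*} [MeasurableSpace Ω] {μ : Measure Ω}

theorem MeasureTheory.lintegral_eq_tsum_setLIntegral_fiber {β : Type*} [Countable β]
    [MeasurableSpace β] [MeasurableSingletonClass β] {N : Ω → β} (hN : Measurable N)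
    (G : β → Ω → ℝ≥0∞) :
    ∫⁻ ω, G (N ω) ω ∂μ = ∑' b, ∫⁻ ω in {ω | N ω = b}, G b ω ∂μ := by
  have hcover : (⋃ b, {ω | N ω = b}) = Set.univ :=
    Set.eq_univ_of_forall fun ω => ⟨_, ⟨N ω, rfl⟩, rfl⟩
  rw [← setLIntegral_univ, ← hcover,
    lintegral_iUnion (s := fun b => {ω | N ω = b}) (fun b => hN (measurableSet_singleton b))
      (fun b b' hbb' => Set.disjoint_left.2 fun ω hb hb' => hbb' (hb.symm.trans hb'))]
  exact tsum_congr fun b => setLIntegral_congr_fun (hN (measurableSet_singleton b))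
    fun ω (hω : N ω = b) => by rw [hω]

namespace ProbabilityTheory

theorem IndepFun.setLIntegral_preimage {β : Type*} [MeasurableSpace β] {f : Ω → β}
    {g : Ω → ℝ≥0∞} (hf : Measurable f) (hg : Measurable g) (hfg : IndepFun f g μ)
    {s : Set β} (hs : MeasurableSet s) :
    ∫⁻ ω in f ⁻¹' s, g ω ∂μ = μ (f ⁻¹' s) * ∫⁻ ω, g ω ∂μ := by
  have hind : IndepFun (s.indicator (1 : β → ℝ≥0∞) ∘ f) g μ :=
    hfg.comp (measurable_one.indicator hs) measurable_id
  have hprod : (f ⁻¹' s).indicator g = (s.indicator 1 ∘ f) * g := by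
    ext ω
    by_cases hω : f ω ∈ s <;> simp [hω]
  rw [← lintegral_indicator (hf hs), hprod, lintegral_mul_eq_lintegral_mul_lintegral_of_indepFun
    ((measurable_one.indicator hs).comp hf) hg hind, ← lintegral_indicator_one (hf hs)]
  rfl

theorem IndepFun.lintegral_comp_eq_tsum {β E : Type*} [Countable β] [MeasurableSpace β]
    [MeasurableSingletonClass β] [MeasurableSpace E] {N : Ω → β} {V : Ω → E}
    (hN : Measurable N) (hV : Measurable V) (hNV : IndepFun N V μ) {F : β → E → ℝ≥0∞}
    (hF : ∀ b, Measurable (F b)) :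
    ∫⁻ ω, F (N ω) (V ω) ∂μ = ∑' b, μ {ω | N ω = b} * ∫⁻ ω, F b (V ω) ∂μ :=
  (lintegral_eq_tsum_setLIntegral_fiber hN fun b ω => F b (V ω)).trans <| tsum_congr fun b =>
    (hNV.comp measurable_id (hF b)).setLIntegral_preimage hN ((hF b).comp hV)
      (measurableSet_singleton b)

theorem iIndepFun.lintegral_ofReal_sq_prod_range {X : ℕ → Ω → ℝ} (hX : iIndepFun X μ)
    (hXm : ∀ j, Measurable (X j)) (hXid : ∀ j, μ.map (X j) = μ.map (X 0))
    (hXsq : Integrable (fun ω => X 0 ω ^ 2) μ) (n : ℕ) :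
    ∫⁻ ω, ENNReal.ofReal ((∏ j ∈ Finset.range n, X j ω) ^ 2) ∂μ
      = ENNReal.ofReal (∫ ω, X 0 ω ^ 2 ∂μ) ^ n := by
  have hsq : Measurable fun x : ℝ => ENNReal.ofReal (x ^ 2) := by fun_prop
  have hmean : ∀ j, ∫⁻ ω, ENNReal.ofReal (X j ω ^ 2) ∂μ = ENNReal.ofReal (∫ ω, X 0 ω ^ 2 ∂μ) :=
    fun j => by
      rw [ofReal_integral_eq_lintegral_ofReal hXsq (ae_of_all _ fun ω => sq_nonneg _)]
      exact ((IdentDistrib.mk (hXm j).aemeasurable (hXm 0).aemeasurable (hXid j)).comp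
        hsq).lintegral_eq
  simp_rw [← Finset.prod_pow, ENNReal.ofReal_prod_of_nonneg fun _ _ => sq_nonneg _]
  rw [lintegral_prod_eq_prod_lintegral_of_indepFun _ (fun j ω => ENNReal.ofReal (X j ω ^ 2))
      (hX.comp _ fun _ => hsq) fun j => hsq.comp (hXm j),
    Finset.prod_congr rfl fun j _ => hmean j, Finset.prod_const, Finset.card_range]

end ProbabilityTheory

end

theorem geometric_weight_mul_sq_estimator {p : ℝ} (hp : 1 < p) {M : ℝ} (hM : 0 ≤ M) (c : ℝ)
    (n : ℕ) :
    (p - 1) / p ^ (n + 1) * ((c * (p ^ (n + 1) / (p - 1))) ^ 2 * M ^ n)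
      = p / (p - 1) * (|c| * Real.sqrt (p * M) ^ n) ^ 2 := by
  have hp1 : p - 1 ≠ 0 := by linarith
  have hpn : p ^ (n + 1) ≠ 0 := pow_ne_zero _ (by linarith)
  rw [mul_pow, mul_pow, sq_abs, ← pow_mul, mul_comm n 2, pow_mul, Real.sq_sqrt (by positivity)]
  field_simp
  ring

theorem estimator_second_moment_bound_general
    {Ω : Type*} [MeasurableSpace Ω] (μ : Measure Ω)
    (p : ℝ) (hp : 1 < p)
    (γ : ℕ → ℝ)
    (N : Ω → ℕ) (hN : Measurable N)
    (hNdist : ∀ n : ℕ, μ {ω | N ω = n} = ENNReal.ofReal ((p - 1) / p ^ (n + 1)))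
    (X : ℕ → Ω → ℝ) (hXm : ∀ j, Measurable (X j))
    (hXindep : iIndepFun X μ)
    (hXid : ∀ j, μ.map (X j) = μ.map (X 0))
    (hNX : IndepFun N (fun ω => fun j => X j ω) μ)
    (hXsq : Integrable (fun ω => (X 0 ω) ^ 2) μ)
    (hfplus : Summable (fun n : ℕ =>
      |γ n| * Real.sqrt (p * ∫ ω, (X 0 ω) ^ 2 ∂μ) ^ n)) :
    ∫⁻ ω, ENNReal.ofReal
        ((γ (N ω) * (p ^ (N ω + 1) / (p - 1)) * ∏ j ∈ Finset.range (N ω), X j ω) ^ 2) ∂μ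
      ≤ ENNReal.ofReal ((p / (p - 1)) *
          (∑' n : ℕ, |γ n| * Real.sqrt (p * ∫ ω, (X 0 ω) ^ 2 ∂μ) ^ n) ^ 2) := by
  set M : ℝ := ∫ ω, (X 0 ω) ^ 2 ∂μ
  have hM : 0 ≤ M := integral_nonneg fun ω => sq_nonneg _
  set a : ℕ → ℝ := fun n => |γ n| * Real.sqrt (p * M) ^ n
  calc ∫⁻ ω, ENNReal.ofReal
        ((γ (N ω) * (p ^ (N ω + 1) / (p - 1)) * ∏ j ∈ Finset.range (N ω), X j ω) ^ 2) ∂μ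
      = ∑' n, μ {ω | N ω = n} * ∫⁻ ω, ENNReal.ofReal
          ((γ n * (p ^ (n + 1) / (p - 1)) * ∏ j ∈ Finset.range n, X j ω) ^ 2) ∂μ :=
        hNX.lintegral_comp_eq_tsum (F := fun n v => ENNReal.ofReal
          ((γ n * (p ^ (n + 1) / (p - 1)) * ∏ j ∈ Finset.range n, v j) ^ 2))
          hN (measurable_pi_lambda _ hXm) fun n => by fun_prop
    _ = ∑' n, ENNReal.ofReal (p / (p - 1)) * ENNReal.ofReal (a n) ^ 2 := by
        refine tsum_congr fun n => ?_
        simp_rw [mul_pow _ (∏ j ∈ _, _), ENNReal.ofReal_mul (sq_nonneg _)]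
        rw [lintegral_const_mul' _ _ ENNReal.ofReal_ne_top,
          hXindep.lintegral_ofReal_sq_prod_range hXm hXid hXsq, hNdist, ← ENNReal.ofReal_pow hM,
          ← ENNReal.ofReal_mul (sq_nonneg _), ← ENNReal.ofReal_mul (by positivity),
          geometric_weight_mul_sq_estimator hp hM, ENNReal.ofReal_mul (by positivity),
          ENNReal.ofReal_pow (by positivity)]
    _ ≤ ENNReal.ofReal (p / (p - 1)) * (∑' n, ENNReal.ofReal (a n)) ^ 2 := by
        rw [ENNReal.tsum_mul_left]
        gcongr
        exact ENNReal.tsum_sq_le_sq_tsum _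
    _ = _ := by
        rw [← ENNReal.ofReal_tsum_of_nonneg (fun n => by positivity) hfplus, ← ENNReal.ofReal_pow
          (tsum_nonneg fun n => by positivity), ← ENNReal.ofReal_mul (by positivity)]

/-- **Lemma 1 (second-moment bound).** Fix `p > 1` and a power series with
coefficients `γ`, and set `f₊(a) = Σ |γ_n| aⁿ`. Let `N` be geometric with parameter
`p` (i.e. `P(N = n) = (p-1)/p^(n+1)`), and let `(X_j)` be i.i.d. square-integrable
real random variables independent of `N` with `f₊(√(p·E[X₁²])) < ∞`. Then the
estimator `θ = γ_N · (p^(N+1)/(p-1)) · ∏_{j=1}^N X_j` satisfies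
`E[θ²] ≤ (p/(p-1)) · f₊(√(p·E[X₁²]))²`. -/
theorem estimator_second_moment_bound
    {Ω : Type*} [MeasurableSpace Ω] (μ : Measure Ω) [IsProbabilityMeasure μ]
    (p : ℝ) (hp : 1 < p)
    (γ : ℕ → ℝ)
    (N : Ω → ℕ) (hN : Measurable N)
    (hNdist : ∀ n : ℕ, μ {ω | N ω = n} = ENNReal.ofReal ((p - 1) / p ^ (n + 1)))
    (X : ℕ → Ω → ℝ) (hXm : ∀ j, Measurable (X j))
    (hXindep : iIndepFun X μ)
    (hXid : ∀ j, μ.map (X j) = μ.map (X 0))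
    (hNX : IndepFun N (fun ω => fun j => X j ω) μ)
    (hXsq : Integrable (fun ω => (X 0 ω) ^ 2) μ)
    (hfplus : Summable (fun n : ℕ =>
      |γ n| * Real.sqrt (p * ∫ ω, (X 0 ω) ^ 2 ∂μ) ^ n)) :
    ∫⁻ ω, ENNReal.ofReal
        ((γ (N ω) * (p ^ (N ω + 1) / (p - 1)) * ∏ j ∈ Finset.range (N ω), X j ω) ^ 2) ∂μ
      ≤ ENNReal.ofReal ((p / (p - 1)) *
          (∑' n : ℕ, |γ n| * Real.sqrt (p * ∫ ω, (X 0 ω) ^ 2 ∂μ) ^ n) ^ 2) :=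
  estimator_second_moment_bound_general μ p hp γ N hN hNdist X hXm hXindep hXid hNX hXsq hfplus
end

section
/- Let d be a positive integer and (β_n)_{n≥0} a sequence of nonnegative reals. Let ι = Σ_{n∈ℕ} (Fin n → Fin d) and define Ψ : ℝ^d → (ι → ℝ) by Ψ(x)(n, k) = √β_n · ∏_{j=1}^n x_{k(j)}. Let x, x' ∈ ℝ^d and assume the series Σ_{n=0}^∞ β_n ‖x‖^{2n} and Σ_{n=0}^∞ β_n ‖x'‖^{2n} converge. Then Ψ(x) and Ψ(x') lie in ℓ²(ι), and ⟨Ψ(x), Ψ(x')⟩_{ℓ²} = Σ_{n=0}^∞ β_n (⟨x, x'⟩)^n. -/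
open scoped ENNReal RealInnerProductSpace

/-!
Group the index set `Σ n, (Fin n → Fin d)` by `n`. On the `n`-th fibre, the multinomial
expansion of `(∑ᵢ xᵢ yᵢ)ⁿ` gives `∑ₖ Ψ(x)(n,k) Ψ(y)(n,k) = βₙ ⟨x, y⟩ⁿ`. Taking `y = x`, the
fibre sums of `Ψ(x)²` are `βₙ ‖x‖²ⁿ`, which are summable, so `Ψ(x) ∈ ℓ²`; the `ℓ²` inner
product is then summed fibre by fibre.
-/

/-- The explicit feature map for a dot-product kernel `Q(⟨x,x'⟩) = Σ β_n ⟨x,x'⟩ⁿ`: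
the entry of `Ψ(x)` at index `(n, k₁, …, k_n)` is `√β_n · x_{k₁} ⋯ x_{k_n}`. -/
noncomputable def featureMap (d : ℕ) (β : ℕ → ℝ) (x : EuclideanSpace ℝ (Fin d)) :
    (Σ n : ℕ, (Fin n → Fin d)) → ℝ :=
  fun i => Real.sqrt (β i.1) * ∏ j : Fin i.1, x (i.2 j)

section SigmaFiniteFibres

variable {α : Type*} {κ : α → Type*} [∀ a, Fintype (κ a)]

theorem memℓp_two_sigma_of_summable_sum_fibre {E : (Σ a, κ a) → Type*}
    [∀ i, NormedAddCommGroup (E i)] {f : ∀ i, E i}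
    (hf : Summable fun a => ∑ k, ‖f ⟨a, k⟩‖ ^ 2) : Memℓp f 2 := by
  refine memℓp_gen ?_
  simp only [ENNReal.toReal_ofNat, Real.rpow_two]
  refine (summable_sigma_of_nonneg fun _ => by positivity).2 ⟨fun _ => .of_finite, ?_⟩
  simpa only [tsum_fintype] using hf

theorem lp.inner_eq_tsum_sum_sigma {𝕜 : Type*} [RCLike 𝕜] {E : (Σ a, κ a) → Type*}
    [∀ i, NormedAddCommGroup (E i)] [∀ i, InnerProductSpace 𝕜 (E i)] (f g : lp E 2) :
    inner 𝕜 f g = ∑' a, ∑ k, inner 𝕜 (f ⟨a, k⟩) (g ⟨a, k⟩) := by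
  rw [lp.inner_eq_tsum, (lp.summable_inner f g).tsum_sigma' fun _ => .of_finite]
  simp only [tsum_fintype]

end SigmaFiniteFibres

section FeatureMap

variable {d : ℕ} {β : ℕ → ℝ}

theorem sum_featureMap_mul_featureMap (hβ : ∀ n, 0 ≤ β n) (x y : EuclideanSpace ℝ (Fin d))
    (n : ℕ) :
    ∑ k : Fin n → Fin d, featureMap d β x ⟨n, k⟩ * featureMap d β y ⟨n, k⟩
      = β n * ⟪x, y⟫ ^ n := by
  have hterm (k : Fin n → Fin d) :
      featureMap d β x ⟨n, k⟩ * featureMap d β y ⟨n, k⟩ = β n * ∏ j, x (k j) * y (k j) := by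
    rw [featureMap, featureMap, mul_mul_mul_comm, Real.mul_self_sqrt (hβ n),
      Finset.prod_mul_distrib]
  simp only [hterm, ← Finset.mul_sum, PiLp.inner_apply, RCLike.inner_apply, conj_trivial,
    mul_comm (y _), Fintype.sum_pow]

theorem memℓp_featureMap (hβ : ∀ n, 0 ≤ β n) {x : EuclideanSpace ℝ (Fin d)}
    (hx : Summable fun n => β n * ‖x‖ ^ (2 * n)) : Memℓp (featureMap d β x) 2 := by
  refine memℓp_two_sigma_of_summable_sum_fibre ?_
  simpa only [Real.norm_eq_abs, sq, abs_mul_abs_self, sum_featureMap_mul_featureMap hβ,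
    real_inner_self_eq_norm_sq, pow_mul] using hx

end FeatureMap

theorem featureMap_memℓ2_and_inner_general
    (d : ℕ) (β : ℕ → ℝ) (hβ : ∀ n, 0 ≤ β n)
    (x x' : EuclideanSpace ℝ (Fin d))
    (hx : Summable (fun n : ℕ => β n * ‖x‖ ^ (2 * n)))
    (hx' : Summable (fun n : ℕ => β n * ‖x'‖ ^ (2 * n))) :
    ∃ (h : Memℓp (featureMap d β x) 2) (h' : Memℓp (featureMap d β x') 2),
      ⟪(⟨featureMap d β x, h⟩ : lp (fun _ : (Σ n : ℕ, (Fin n → Fin d)) => ℝ) 2),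
        (⟨featureMap d β x', h'⟩ : lp (fun _ : (Σ n : ℕ, (Fin n → Fin d)) => ℝ) 2)⟫
        = ∑' n : ℕ, β n * ⟪x, x'⟫ ^ n := by
  refine ⟨memℓp_featureMap hβ hx, memℓp_featureMap hβ hx', ?_⟩
  rw [lp.inner_eq_tsum_sum_sigma]
  simp only [RCLike.inner_apply, conj_trivial, mul_comm (featureMap d β x' _)]
  exact tsum_congr (sum_featureMap_mul_featureMap hβ x x')

/-- **Explicit feature map for dot-product kernels (Section 5.2).** If the series
`Σ β_n ‖x‖^(2n)` and `Σ β_n ‖x'‖^(2n)` converge (with `β_n ≥ 0`), then `Ψ(x)` and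
`Ψ(x')` lie in `ℓ²(ι)` for `ι = Σ_{n∈ℕ} (Fin n → Fin d)`, and their `ℓ²` inner
product equals `Σ_{n=0}^∞ β_n ⟨x, x'⟩ⁿ`. -/
theorem featureMap_memℓ2_and_inner
    (d : ℕ) (hd : 0 < d) (β : ℕ → ℝ) (hβ : ∀ n, 0 ≤ β n)
    (x x' : EuclideanSpace ℝ (Fin d))
    (hx : Summable (fun n : ℕ => β n * ‖x‖ ^ (2 * n)))
    (hx' : Summable (fun n : ℕ => β n * ‖x'‖ ^ (2 * n))) :
    ∃ (h : Memℓp (featureMap d β x) 2) (h' : Memℓp (featureMap d β x') 2),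
      ⟪(⟨featureMap d β x, h⟩ : lp (fun _ : (Σ n : ℕ, (Fin n → Fin d)) => ℝ) 2),
        (⟨featureMap d β x', h'⟩ : lp (fun _ : (Σ n : ℕ, (Fin n → Fin d)) => ℝ) 2)⟫
        = ∑' n : ℕ, β n * ⟪x, x'⟫ ^ n :=
  featureMap_memℓ2_and_inner_general d β hβ x x' hx hx'
end

section
/- Let d be a positive integer, (β_n)_{n≥0} a sequence of nonnegative reals, and p > 1. Let ι = Σ_{n∈ℕ} (Fin n → Fin d). Given n, n' ∈ ℕ and vectors a_1,…,a_n ∈ ℝ^d and b_1,…,b_{n'} ∈ ℝ^d, define u, v ∈ ℓ²(ι) by u(n, k) = √β_n · (p^{n+1}/(p−1)) · ∏_{j=1}^n (a_j)_{k(j)} for every k : Fin n → Fin d and u = 0 at every index whose first component differs from n, and analogously v supported at level n' built from b_1,…,b_{n'}. Then ⟨u, v⟩_{ℓ²} = 0 if n ≠ n', and ⟨u, v⟩_{ℓ²} = β_n · (p^{2n+2}/(p−1)²) · ∏_{j=1}^n ⟨a_j, b_j⟩ if n = n'. -/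
/-!
Both estimates are finite linear combinations of the orthonormal vectors `lp.single 2 ⟨m, k⟩ 1`
of `ℓ²`, so their inner product is the sum of the products of the coefficients at common indices.
Indices at different levels never coincide, which gives `0` when `n ≠ n'`; at the same level only
the diagonal `k = k'` survives, and `∑ₖ ∏ⱼ aⱼ(k j) bⱼ(k j) = ∏ⱼ ∑ᵢ aⱼ(i) bⱼ(i) = ∏ⱼ ⟪aⱼ, bⱼ⟫` by
distributivity.
-/

open scoped ENNReal RealInnerProductSpace

/-- The randomized feature-map estimate built from `n` noisy copies `a 0, …, a (n-1)`
of an instance: the element of `ℓ²(Σ m, Fin m → Fin d)` supported on level `n`, whose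
entry at index `(n, k)` is `√β_n · (p^(n+1)/(p-1)) · ∏_{j<n} (a j)_{k(j)}`. -/
noncomputable def featureEstimate (d : ℕ) (β : ℕ → ℝ) (p : ℝ) (n : ℕ)
    (a : ℕ → EuclideanSpace ℝ (Fin d)) :
    lp (fun _ : (Σ m : ℕ, (Fin m → Fin d)) => ℝ) 2 :=
  ∑ k : Fin n → Fin d,
    (Real.sqrt (β n) * (p ^ (n + 1) / (p - 1)) * ∏ j : Fin n, a j (k j)) •
      lp.single 2 (⟨n, k⟩ : Σ m : ℕ, (Fin m → Fin d)) (1 : ℝ)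

section SumOfSingles

variable {ι : Type*} [DecidableEq ι]

theorem lp.inner_single_one_single_one (i j : ι) :
    ⟪(lp.single 2 i (1 : ℝ) : lp (fun _ : ι => ℝ) 2), lp.single 2 j (1 : ℝ)⟫ =
      if i = j then 1 else 0 := by
  rw [lp.inner_single_left, lp.single_apply, Pi.single_apply, eq_comm]
  split_ifs <;> simp

theorem lp.inner_sum_smul_single_one {α γ : Type*} (s : Finset α) (t : Finset γ)
    (f : α → ι) (g : γ → ι) (c : α → ℝ) (e : γ → ℝ) :
    ⟪∑ x ∈ s, c x • (lp.single 2 (f x) (1 : ℝ) : lp (fun _ : ι => ℝ) 2),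
        ∑ y ∈ t, e y • (lp.single 2 (g y) (1 : ℝ) : lp (fun _ : ι => ℝ) 2)⟫ =
      ∑ x ∈ s, ∑ y ∈ t, if f x = g y then c x * e y else 0 := by
  simp only [sum_inner, inner_sum, real_inner_smul_left, real_inner_smul_right,
    lp.inner_single_one_single_one, mul_ite, mul_one, mul_zero]
  rw [Finset.sum_comm]
  simp only [mul_comm (e _)]

end SumOfSingles

theorem EuclideanSpace.sum_prod_mul_eq_prod_inner {σ ι : Type*} [Fintype σ] [DecidableEq σ]
    [Fintype ι] (x y : σ → EuclideanSpace ℝ ι) :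
    ∑ k : σ → ι, ∏ j, x j (k j) * y j (k j) = ∏ j, ⟪x j, y j⟫ := by
  simp only [PiLp.inner_apply, RCLike.inner_apply, conj_trivial, Finset.prod_univ_sum,
    Fintype.piFinset_univ, mul_comm]

theorem featureEstimate_inner_of_ne {d : ℕ} (β : ℕ → ℝ) (p : ℝ) {n n' : ℕ} (h : n ≠ n')
    (a b : ℕ → EuclideanSpace ℝ (Fin d)) :
    ⟪featureEstimate d β p n a, featureEstimate d β p n' b⟫ = 0 := by
  rw [featureEstimate, featureEstimate, lp.inner_sum_smul_single_one]
  refine Finset.sum_eq_zero fun k _ => Finset.sum_eq_zero fun k' _ => ?_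
  rw [if_neg fun hk => h (congrArg Sigma.fst hk)]

theorem featureEstimate_inner_self {d : ℕ} (β : ℕ → ℝ) (p : ℝ) (n : ℕ)
    (a b : ℕ → EuclideanSpace ℝ (Fin d)) :
    ⟪featureEstimate d β p n a, featureEstimate d β p n b⟫ =
      (Real.sqrt (β n) * (p ^ (n + 1) / (p - 1))) ^ 2 * ∏ j ∈ Finset.range n, ⟪a j, b j⟫ := by
  rw [featureEstimate, featureEstimate, lp.inner_sum_smul_single_one]
  simp only [Sigma.mk.inj_iff, heq_iff_eq, true_and, Finset.sum_ite_eq, Finset.mem_univ, if_true]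
  rw [← Fin.prod_univ_eq_prod_range (fun j => ⟪a j, b j⟫),
    ← EuclideanSpace.sum_prod_mul_eq_prod_inner, Finset.mul_sum]
  refine Finset.sum_congr rfl fun k _ => ?_
  rw [Finset.prod_mul_distrib]
  ring

theorem prod_subroutine_correct_general
    (d : ℕ) (β : ℕ → ℝ) (hβ : ∀ n, 0 ≤ β n) (p : ℝ)
    (n n' : ℕ) (a b : ℕ → EuclideanSpace ℝ (Fin d)) :
    (n ≠ n' → ⟪featureEstimate d β p n a, featureEstimate d β p n' b⟫ = 0) ∧
    (n = n' → ⟪featureEstimate d β p n a, featureEstimate d β p n' b⟫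
      = β n * (p ^ (2 * n + 2) / (p - 1) ^ 2) *
          ∏ j ∈ Finset.range n, ⟪a j, b j⟫) := by
  refine ⟨fun h => featureEstimate_inner_of_ne β p h a b, ?_⟩
  rintro rfl
  rw [featureEstimate_inner_self, mul_pow, Real.sq_sqrt (hβ n), div_pow, ← pow_mul]
  ring_nf

/-- **Lemma 4 (correctness of the `Prod` subroutine).** For the randomized
feature-map estimates `u`, `v` built at levels `n`, `n'` from vectors
`a_1,…,a_n` and `b_1,…,b_{n'}` of `ℝ^d`, the `ℓ²` inner product `⟨u, v⟩` is `0`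
when `n ≠ n'`, and equals `β_n · (p^(2n+2)/(p-1)²) · ∏_{j=1}^n ⟨a_j, b_j⟩`
when `n = n'`. -/
theorem prod_subroutine_correct
    (d : ℕ) (hd : 0 < d) (β : ℕ → ℝ) (hβ : ∀ n, 0 ≤ β n) (p : ℝ) (hp : 1 < p)
    (n n' : ℕ) (a b : ℕ → EuclideanSpace ℝ (Fin d)) :
    (n ≠ n' → ⟪featureEstimate d β p n a, featureEstimate d β p n' b⟫ = 0) ∧
    (n = n' → ⟪featureEstimate d β p n a, featureEstimate d β p n' b⟫
      = β n * (p ^ (2 * n + 2) / (p - 1) ^ 2) *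
          ∏ j ∈ Finset.range n, ⟪a j, b j⟫) :=
  prod_subroutine_correct_general d β hβ p n n' a b
end

section
/- Let H be a real Hilbert space, p > 1, and let ℓ' : ℝ → ℝ be given by a power series ℓ'(a) = Σ_{n=0}^∞ γ_n a^n, with ℓ'₊(a) := Σ_{n=0}^∞ |γ_n| a^n. Let y ∈ {−1, +1}, let w ∈ H with ‖w‖² ≤ B_w, and on a probability space let N be a random variable taking values in the nonnegative integers with P(N = n) = (p−1)/p^{n+1} for every n ∈ ℕ, and let (Φ_j)_{j≥1} be i.i.d. H-valued Bochner-integrable random vectors, independent of N, with E[Φ_1] = ψ and E[‖Φ_1‖²] ≤ B_Ψ, where ℓ'₊(√(p·B_w·B_Ψ)) < ∞. Define g̃ := y · γ_N · (p^{N+1}/(p−1)) · ∏_{j=1}^N (y·⟨w, Φ_j⟩). Then g̃ is integrable and E[g̃] = y · ℓ'(y·⟨w, ψ⟩). -/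
/-!
Condition on `N`. As `N` is independent of the `Φ j`, the event `{N = n}` contributes
`P(N = n)` times the expectation of the `n`-th term, and the importance weight
`p^(n+1)/(p-1)` cancels `P(N = n)`. What is left is `y γ_n E[∏_{j<n} y⟪w, Φ_j⟫]`, which by
independence of the `Φ_j` equals `y γ_n (y⟪w, ψ⟫)^n`; summing over `n` gives `y ℓ'(y⟪w, ψ⟫)`.
The same computation with absolute values bounds `E|g̃|` by
`Σ |γ_n| (‖w‖ E‖Φ_1‖)^n ≤ ℓ'₊(√(p B_w B_Ψ))`, which justifies exchanging sum and expectation.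
-/

open MeasureTheory ProbabilityTheory
open scoped RealInnerProductSpace

lemma Set.iUnion_preimage_singleton_eq_univ {α β : Type*} (f : α → β) :
    ⋃ b, f ⁻¹' {b} = Set.univ :=
  Set.iUnion_eq_univ_iff.2 fun a ↦ ⟨f a, rfl⟩

lemma Real.mul_sqrt_le_sqrt_mul {a b c e p : ℝ} (ha : 0 ≤ a) (hab : a ^ 2 ≤ b) (he : 0 ≤ e)
    (hec : e ≤ c) (hp : 1 ≤ p) : a * √e ≤ √(p * b * c) := by
  have hb : 0 ≤ b := (sq_nonneg a).trans hab
  rw [← Real.sqrt_sq ha, ← Real.sqrt_mul (sq_nonneg a), mul_assoc]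
  exact Real.sqrt_le_sqrt ((mul_le_mul hab hec he hb).trans
    (le_mul_of_one_le_left (mul_nonneg hb (he.trans hec)) hp))

namespace ProbabilityTheory

section Mixture

variable {Ω E ι : Type*} [MeasurableSpace Ω] {μ : Measure Ω} [MeasurableSpace E]
  [MeasurableSpace ι] {N : Ω → ι} {Z : Ω → E}

lemma IndepFun.setIntegral_preimage_eq_mul_s9 (hNZ : IndepFun N Z μ) (hN : Measurable N)
    (hZ : AEMeasurable Z μ) {B : Set ι} (hB : MeasurableSet B) {f : E → ℝ}
    (hf : AEStronglyMeasurable f (μ.map Z)) :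
    ∫ ω in N ⁻¹' B, f (Z ω) ∂μ = μ.real (N ⁻¹' B) * ∫ ω, f (Z ω) ∂μ :=
  Indep.setIntegral_eq_mul hN.comap_le hNZ hZ ⟨B, hB, rfl⟩ hf

variable [MeasurableSingletonClass ι]

lemma IndepFun.setIntegral_fiber_eq_mul (hNZ : IndepFun N Z μ) (hN : Measurable N)
    (hZ : Measurable Z) {f : ι → E → ℝ} (hf : ∀ i, Measurable (f i)) (i : ι) :
    ∫ ω in N ⁻¹' {i}, f (N ω) (Z ω) ∂μ = μ.real (N ⁻¹' {i}) * ∫ ω, f i (Z ω) ∂μ := by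
  rw [setIntegral_congr_fun (hN (measurableSet_singleton i))
      fun ω (hω : N ω = i) ↦ congrArg (f · (Z ω)) hω,
    hNZ.setIntegral_preimage_eq_mul_s9 hN hZ.aemeasurable (measurableSet_singleton i)
      (hf i).aestronglyMeasurable]

variable [Countable ι] {G : ι → E → ℝ}

lemma IndepFun.integrable_comp_of_summable (hNZ : IndepFun N Z μ) (hN : Measurable N)
    (hZ : Measurable Z) (hG : ∀ i, Measurable (G i))
    (hGint : ∀ i, Integrable (fun ω ↦ G i (Z ω)) μ)
    (hsum : Summable fun i ↦ μ.real (N ⁻¹' {i}) * ∫ ω, |G i (Z ω)| ∂μ) :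
    Integrable (fun ω ↦ G (N ω) (Z ω)) μ := by
  rw [← integrableOn_univ, ← Set.iUnion_preimage_singleton_eq_univ N]
  refine integrableOn_iUnion_of_summable_integral_norm (fun i ↦ ?_) (hsum.congr fun i ↦ ?_)
  · exact (hGint i).integrableOn.congr_fun (fun ω (hω : N ω = i) ↦ congrArg (G · (Z ω)) hω.symm)
      (hN (measurableSet_singleton i))
  · simp only [Real.norm_eq_abs]
    exact (hNZ.setIntegral_fiber_eq_mul hN hZ (fun i ↦ (hG i).abs) i).symm

lemma IndepFun.hasSum_integral_comp (hNZ : IndepFun N Z μ) (hN : Measurable N)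
    (hZ : Measurable Z) (hG : ∀ i, Measurable (G i))
    (hint : Integrable (fun ω ↦ G (N ω) (Z ω)) μ) :
    HasSum (fun i ↦ μ.real (N ⁻¹' {i}) * ∫ ω, G i (Z ω) ∂μ) (∫ ω, G (N ω) (Z ω) ∂μ) := by
  have h := hasSum_integral_iUnion (fun i ↦ hN (measurableSet_singleton i))
    (pairwise_disjoint_fiber N) hint.integrableOn
  rw [Set.iUnion_preimage_singleton_eq_univ N, setIntegral_univ] at h
  exact h.congr_fun fun i ↦ (hNZ.setIntegral_fiber_eq_mul hN hZ hG i).symm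

variable {c b : ι → ℝ} {g : ι → E → ℝ}

lemma IndepFun.integrable_mul_comp_of_summable (hNZ : IndepFun N Z μ) (hN : Measurable N)
    (hZ : Measurable Z) (hcb : ∀ i, μ.real (N ⁻¹' {i}) * c i = b i)
    (hg : ∀ i, Measurable (g i)) (hgint : ∀ i, Integrable (fun ω ↦ g i (Z ω)) μ)
    (hsum : Summable fun i ↦ |b i| * ∫ ω, |g i (Z ω)| ∂μ) :
    Integrable (fun ω ↦ c (N ω) * g (N ω) (Z ω)) μ := by
  refine hNZ.integrable_comp_of_summable (G := fun i v ↦ c i * g i v) hN hZ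
    (fun i ↦ (hg i).const_mul _) (fun i ↦ (hgint i).const_mul _) (hsum.congr fun i ↦ ?_)
  simp only [abs_mul, integral_const_mul, ← hcb, abs_of_nonneg measureReal_nonneg, mul_assoc]

lemma IndepFun.hasSum_integral_mul_comp (hNZ : IndepFun N Z μ) (hN : Measurable N)
    (hZ : Measurable Z) (hcb : ∀ i, μ.real (N ⁻¹' {i}) * c i = b i)
    (hg : ∀ i, Measurable (g i)) (hint : Integrable (fun ω ↦ c (N ω) * g (N ω) (Z ω)) μ) :
    HasSum (fun i ↦ b i * ∫ ω, g i (Z ω) ∂μ) (∫ ω, c (N ω) * g (N ω) (Z ω) ∂μ) := by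
  refine (hNZ.hasSum_integral_comp (G := fun i v ↦ c i * g i v) hN hZ
    (fun i ↦ (hg i).const_mul _) hint).congr_fun fun i ↦ ?_
  rw [integral_const_mul, ← mul_assoc, hcb]

end Mixture

variable {Ω : Type*} [MeasurableSpace Ω] {μ : Measure Ω}

section Products

variable {X : ℕ → Ω → ℝ}

lemma iIndepFun.indepFun_fun_prod_range_succ (hX : iIndepFun X μ) (hm : ∀ j, Measurable (X j))
    (n : ℕ) : IndepFun (fun ω ↦ ∏ j ∈ Finset.range n, X j ω) (X n) μ := by
  simpa only [Finset.prod_fn] using hX.indepFun_prod_range_succ hm n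

variable [IsProbabilityMeasure μ]

lemma iIndepFun.integrable_prod_range (hX : iIndepFun X μ) (hm : ∀ j, Measurable (X j))
    (hint : ∀ j, Integrable (X j) μ) (n : ℕ) :
    Integrable (fun ω ↦ ∏ j ∈ Finset.range n, X j ω) μ := by
  induction n with
  | zero => simp
  | succ n ih =>
    simp only [Finset.prod_range_succ]
    exact (hX.indepFun_fun_prod_range_succ hm n).integrable_mul ih (hint n)

lemma iIndepFun.integral_prod_range (hX : iIndepFun X μ) (hm : ∀ j, Measurable (X j))
    (hint : ∀ j, Integrable (X j) μ) (n : ℕ) :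
    ∫ ω, ∏ j ∈ Finset.range n, X j ω ∂μ = ∏ j ∈ Finset.range n, ∫ ω, X j ω ∂μ := by
  induction n with
  | zero => simp
  | succ n ih =>
    simp only [Finset.prod_range_succ]
    rw [← ih, ← (hX.indepFun_fun_prod_range_succ hm n).integral_fun_mul_eq_mul_integral
      (hX.integrable_prod_range hm hint n).aestronglyMeasurable (hint n).aestronglyMeasurable]

end Products

variable [IsProbabilityMeasure μ]

lemma integral_le_sqrt_integral_sq {f : Ω → ℝ} (hf : AEStronglyMeasurable f μ)
    (hf2 : Integrable (fun ω ↦ f ω ^ 2) μ) :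
    ∫ ω, f ω ∂μ ≤ √(∫ ω, f ω ^ 2 ∂μ) := by
  have hvar := variance_nonneg f μ
  rw [variance_eq_sub ((memLp_two_iff_integrable_sq hf).2 hf2)] at hvar
  exact (le_abs_self _).trans (Real.abs_le_sqrt (by simpa using hvar))

section Inner

variable {H : Type*} [NormedAddCommGroup H] [InnerProductSpace ℝ H]

lemma integral_abs_inner_le {Ψ : Ω → H} (hΨ : Integrable Ψ μ)
    (hΨ2 : Integrable (fun ω ↦ ‖Ψ ω‖ ^ 2) μ) (w : H) :
    ∫ ω, |⟪w, Ψ ω⟫| ∂μ ≤ ‖w‖ * √(∫ ω, ‖Ψ ω‖ ^ 2 ∂μ) :=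
  calc ∫ ω, |⟪w, Ψ ω⟫| ∂μ ≤ ∫ ω, ‖w‖ * ‖Ψ ω‖ ∂μ :=
        integral_mono (hΨ.const_inner w).abs (hΨ.norm.const_mul _)
          fun ω ↦ abs_real_inner_le_norm w (Ψ ω)
    _ = ‖w‖ * ∫ ω, ‖Ψ ω‖ ∂μ := integral_const_mul _ _
    _ ≤ ‖w‖ * √(∫ ω, ‖Ψ ω‖ ^ 2 ∂μ) :=
        mul_le_mul_of_nonneg_left (integral_le_sqrt_integral_sq hΨ.norm.1 hΨ2) (norm_nonneg w)

variable [MeasurableSpace H] [BorelSpace H] {Φ : ℕ → Ω → H}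

lemma iIndepFun.integrable_prod_range_inner (hΦ : iIndepFun Φ μ) (hm : ∀ j, Measurable (Φ j))
    (hid : ∀ j, IdentDistrib (Φ j) (Φ 0) μ μ) (hint : Integrable (Φ 0) μ) (w : H) (n : ℕ) :
    Integrable (fun ω ↦ ∏ j ∈ Finset.range n, ⟪w, Φ j ω⟫) μ := by
  have hw : Measurable fun v : H ↦ ⟪w, v⟫ := (continuous_const.inner continuous_id).measurable
  have hX : iIndepFun (fun j ω ↦ ⟪w, Φ j ω⟫) μ := hΦ.comp _ fun _ ↦ hw
  exact hX.integrable_prod_range (fun j ↦ hw.comp (hm j))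
    (fun j ↦ ((hid j).comp hw).integrable_iff.2 (hint.const_inner w)) n

lemma iIndepFun.integral_prod_range_inner [CompleteSpace H] (hΦ : iIndepFun Φ μ)
    (hm : ∀ j, Measurable (Φ j)) (hid : ∀ j, IdentDistrib (Φ j) (Φ 0) μ μ)
    (hint : Integrable (Φ 0) μ) (w : H) (n : ℕ) :
    ∫ ω, ∏ j ∈ Finset.range n, ⟪w, Φ j ω⟫ ∂μ = ⟪w, ∫ ω, Φ 0 ω ∂μ⟫ ^ n := by
  have hw : Measurable fun v : H ↦ ⟪w, v⟫ := (continuous_const.inner continuous_id).measurable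
  have hX : iIndepFun (fun j ω ↦ ⟪w, Φ j ω⟫) μ := hΦ.comp _ fun _ ↦ hw
  have hmean (j : ℕ) : ∫ ω, ⟪w, Φ j ω⟫ ∂μ = ⟪w, ∫ ω, Φ 0 ω ∂μ⟫ :=
    ((hid j).comp hw).integral_eq.trans (integral_inner hint w)
  rw [hX.integral_prod_range (fun j ↦ hw.comp (hm j))
      (fun j ↦ ((hid j).comp hw).integrable_iff.2 (hint.const_inner w)),
    Finset.prod_congr rfl fun j _ ↦ hmean j, Finset.prod_const, Finset.card_range]

lemma iIndepFun.integral_abs_prod_range_inner_le (hΦ : iIndepFun Φ μ)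
    (hm : ∀ j, Measurable (Φ j)) (hid : ∀ j, IdentDistrib (Φ j) (Φ 0) μ μ)
    (hint : Integrable (Φ 0) μ) (hint2 : Integrable (fun ω ↦ ‖Φ 0 ω‖ ^ 2) μ) (w : H) (n : ℕ) :
    ∫ ω, |∏ j ∈ Finset.range n, ⟪w, Φ j ω⟫| ∂μ ≤ (‖w‖ * √(∫ ω, ‖Φ 0 ω‖ ^ 2 ∂μ)) ^ n := by
  have hw : Measurable fun v : H ↦ |⟪w, v⟫| :=
    (continuous_const.inner continuous_id).abs.measurable
  have hX : iIndepFun (fun j ω ↦ |⟪w, Φ j ω⟫|) μ := hΦ.comp _ fun _ ↦ hw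
  have hmean (j : ℕ) : ∫ ω, |⟪w, Φ j ω⟫| ∂μ ≤ ‖w‖ * √(∫ ω, ‖Φ 0 ω‖ ^ 2 ∂μ) :=
    ((hid j).comp hw).integral_eq.trans_le (integral_abs_inner_le hint hint2 w)
  simp_rw [Finset.abs_prod]
  rw [hX.integral_prod_range (fun j ↦ hw.comp (hm j))
    fun j ↦ ((hid j).comp hw).integrable_iff.2 (hint.const_inner w).abs]
  calc ∏ j ∈ Finset.range n, ∫ ω, |⟪w, Φ j ω⟫| ∂μ
      ≤ ∏ _j ∈ Finset.range n, ‖w‖ * √(∫ ω, ‖Φ 0 ω‖ ^ 2 ∂μ) :=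
        Finset.prod_le_prod (fun _ _ ↦ integral_nonneg fun _ ↦ abs_nonneg _) fun j _ ↦ hmean j
    _ = _ := by rw [Finset.prod_const, Finset.card_range]

end Inner

end ProbabilityTheory

/-- **Lemma 2 (unbiasedness of `Grad_Length_Estimate`).** Fix `p > 1` and a power
series `ℓ'(a) = Σ γ_n aⁿ`. Let `y ∈ {-1, +1}`, `w` in a real Hilbert space with
`‖w‖² ≤ B_w`, `N` geometric with parameter `p`, and `(Φ_j)` i.i.d. integrable
`H`-valued random vectors independent of `N` with `E[Φ₁] = ψ`, `E[‖Φ₁‖²] ≤ B_Ψ`, and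
`ℓ'₊(√(p·B_w·B_Ψ)) < ∞`. Then
`g̃ = y · γ_N · (p^(N+1)/(p-1)) · ∏_{j=1}^N (y·⟨w, Φ_j⟩)` is integrable and
`E[g̃] = y · ℓ'(y·⟨w, ψ⟩)`. -/
theorem grad_length_estimate_unbiased
    {Ω : Type*} [MeasurableSpace Ω] (μ : Measure Ω) [IsProbabilityMeasure μ]
    {H : Type*} [NormedAddCommGroup H] [InnerProductSpace ℝ H] [CompleteSpace H]
    [MeasurableSpace H] [BorelSpace H]
    (p : ℝ) (hp : 1 < p)
    (l' : ℝ → ℝ) (γ : ℕ → ℝ) (hl' : ∀ a : ℝ, l' a = ∑' n : ℕ, γ n * a ^ n)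
    (y : ℝ) (hy : y = 1 ∨ y = -1)
    (w : H) (Bw : ℝ) (hw : ‖w‖ ^ 2 ≤ Bw)
    (N : Ω → ℕ) (hN : Measurable N)
    (hNdist : ∀ n : ℕ, μ {ω | N ω = n} = ENNReal.ofReal ((p - 1) / p ^ (n + 1)))
    (Φ : ℕ → Ω → H) (hΦm : ∀ j, Measurable (Φ j))
    (hΦindep : iIndepFun Φ μ)
    (hΦid : ∀ j, μ.map (Φ j) = μ.map (Φ 0))
    (hNΦ : IndepFun N (fun ω => fun j => Φ j ω) μ)
    (ψ : H) (hΦint : Integrable (Φ 0) μ) (hΦmean : ∫ ω, Φ 0 ω ∂μ = ψ)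
    (BΨ : ℝ) (hΦsq : Integrable (fun ω => ‖Φ 0 ω‖ ^ 2) μ)
    (hΦ2 : ∫ ω, ‖Φ 0 ω‖ ^ 2 ∂μ ≤ BΨ)
    (hplus : Summable (fun n : ℕ => |γ n| * Real.sqrt (p * Bw * BΨ) ^ n)) :
    Integrable (fun ω => y * γ (N ω) * (p ^ (N ω + 1) / (p - 1)) *
      ∏ j ∈ Finset.range (N ω), (y * ⟪w, Φ j ω⟫)) μ ∧
    ∫ ω, y * γ (N ω) * (p ^ (N ω + 1) / (p - 1)) *
        ∏ j ∈ Finset.range (N ω), (y * ⟪w, Φ j ω⟫) ∂μ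
      = y * l' (y * ⟪w, ψ⟫) := by
  have hp1 : 0 < p - 1 := sub_pos.2 hp
  have hy1 : |y| = 1 := by rcases hy with rfl | rfl <;> simp
  have hid (j : ℕ) : IdentDistrib (Φ j) (Φ 0) μ μ :=
    ⟨(hΦm j).aemeasurable, (hΦm 0).aemeasurable, hΦid j⟩
  have hZ : Measurable fun ω j ↦ Φ j ω := measurable_pi_lambda _ hΦm
  have hcb (n : ℕ) : μ.real (N ⁻¹' {n}) * (y * γ n * (p ^ (n + 1) / (p - 1))) = y * γ n := by
    change (μ {ω | N ω = n}).toReal * _ = _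
    rw [hNdist n, ENNReal.toReal_ofReal (by positivity)]
    field_simp
  have hg (n : ℕ) : Measurable fun v : ℕ → H ↦ ∏ j ∈ Finset.range n, ⟪y • w, v j⟫ :=
    Finset.measurable_prod _ fun j _ ↦
      (continuous_const.inner continuous_id).measurable.comp (measurable_pi_apply j)
  have hsum : Summable fun n ↦
      |y * γ n| * ∫ ω, |∏ j ∈ Finset.range n, ⟪y • w, Φ j ω⟫| ∂μ := by
    refine hplus.of_nonneg_of_le (fun n ↦ by positivity) fun n ↦ ?_
    rw [abs_mul, hy1, one_mul]
    gcongr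
    refine (hΦindep.integral_abs_prod_range_inner_le hΦm hid hΦint hΦsq _ n).trans ?_
    gcongr
    rw [norm_smul, Real.norm_eq_abs, hy1, one_mul]
    exact Real.mul_sqrt_le_sqrt_mul (norm_nonneg w) hw
      (integral_nonneg fun _ ↦ sq_nonneg _) hΦ2 hp.le
  simp only [← real_inner_smul_left]
  have hint := hNΦ.integrable_mul_comp_of_summable hN hZ hcb hg
    (hΦindep.integrable_prod_range_inner hΦm hid hΦint (y • w)) hsum
  refine ⟨hint, ?_⟩
  rw [hl', ← tsum_mul_left]
  refine ((hNΦ.hasSum_integral_mul_comp hN hZ hcb hg hint).congr_fun fun n ↦ ?_).tsum_eq.symm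
  rw [hΦindep.integral_prod_range_inner hΦm hid hΦint, hΦmean, mul_assoc]
end

section
/- Let ℓ : ℝ → ℝ be convex, bounded from below, and differentiable at 0 with ℓ'(0) < 0. Then there exists B > 0 such that for every B_w ≥ B, the set of minimizers of the function w ↦ ℓ(3w) + ℓ(−w) over the interval [−√B_w, √B_w] is disjoint from the set of minimizers of the function w ↦ ℓ(w) over [−√B_w, √B_w]. -/
open Set

/-- **Key step of Theorem 3 (one noisy copy is not enough).**
Let `ℓ : ℝ → ℝ` be convex, bounded from below, and differentiable at `0` with
`ℓ'(0) < 0`. Then there exists `B > 0` such that for every `B_w ≥ B`, the set of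
minimizers of `w ↦ ℓ(3w) + ℓ(-w)` over `[-√B_w, √B_w]` is disjoint from the set of
minimizers of `w ↦ ℓ(w)` over `[-√B_w, √B_w]`. -/
theorem minimizer_sets_disjoint
    (l : ℝ → ℝ) (hconv : ConvexOn ℝ Set.univ l)
    (hbdd : BddBelow (Set.range l))
    (hdiff : DifferentiableAt ℝ l 0) (hderiv : deriv l 0 < 0) :
    ∃ B > (0 : ℝ), ∀ Bw ≥ B,
      Disjoint
        {w : ℝ | w ∈ Icc (-Real.sqrt Bw) (Real.sqrt Bw) ∧
          ∀ v ∈ Icc (-Real.sqrt Bw) (Real.sqrt Bw),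
            l (3 * w) + l (-w) ≤ l (3 * v) + l (-v)}
        {w : ℝ | w ∈ Icc (-Real.sqrt Bw) (Real.sqrt Bw) ∧
          ∀ v ∈ Icc (-Real.sqrt Bw) (Real.sqrt Bw), l w ≤ l v} := by
  obtain ⟨m, hm⟩ := hbdd
  have hmle : ∀ y, m ≤ l y := fun y => hm ⟨y, rfl⟩
  set c := deriv l 0 with hc
  have hcneg : 0 < -c := by linarith
  -- slopes over intervals ending at a nonpositive point are at most `c`
  have slope_le : ∀ x y : ℝ, x < y → y ≤ 0 → l y - l x ≤ c * (y - x) := by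
    intro x y hxy hy0
    have hxyd : 0 < y - x := by linarith
    rcases eq_or_lt_of_le hy0 with rfl | hy0'
    · have h := hconv.slope_le_deriv (mem_univ x) (mem_univ 0) hxy hdiff
      rw [slope_def_field, div_le_iff₀ hxyd] at h
      linarith [h]
    · have hx0 : x < 0 := hxy.trans hy0'
      have h1 : (l y - l x) / (y - x) ≤ (l 0 - l x) / (0 - x) :=
        hconv.secant_mono (mem_univ x) (mem_univ y) (mem_univ 0)
          hxy.ne' hx0.ne' hy0
      have h2 : (l 0 - l x) / (0 - x) ≤ c := by
        have h := hconv.slope_le_deriv (mem_univ x) (mem_univ 0) hx0 hdiff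
        rwa [slope_def_field] at h
      have h3 : (l y - l x) / (y - x) ≤ c := h1.trans h2
      rw [div_le_iff₀ hxyd] at h3
      linarith [h3]
  -- supporting line at 0
  have support : ∀ y : ℝ, l 0 + c * y ≤ l y := by
    intro y
    rcases lt_trichotomy y 0 with hy | rfl | hy
    · have h := slope_le y 0 hy le_rfl
      nlinarith [h]
    · simp
    · have h := hconv.deriv_le_slope (mem_univ 0) (mem_univ y) hy hdiff
      rw [slope_def_field, le_div_iff₀ (by linarith : (0:ℝ) < y - 0)] at h
      nlinarith [h]
  -- pick t > 0 with l t < l 0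
  obtain ⟨t, ht0, hlt⟩ : ∃ t : ℝ, 0 < t ∧ l t < l 0 := by
    have hslope : Filter.Tendsto (slope l 0) (nhdsWithin 0 {(0:ℝ)}ᶜ) (nhds c) :=
      hasDerivAt_iff_tendsto_slope.mp hdiff.hasDerivAt
    have hev : ∀ᶠ y in nhdsWithin 0 {(0:ℝ)}ᶜ, slope l 0 y < 0 :=
      hslope.eventually (eventually_lt_nhds hderiv)
    have hmono : nhdsWithin (0:ℝ) (Ioi 0) ≤ nhdsWithin 0 {(0:ℝ)}ᶜ :=
      nhdsWithin_mono 0 (fun y hy => ne_of_gt hy)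
    have hev' : ∀ᶠ y in nhdsWithin (0:ℝ) (Ioi 0), slope l 0 y < 0 :=
      hev.filter_mono hmono
    obtain ⟨t, hts, htm⟩ := (hev'.and eventually_mem_nhdsWithin).exists
    have htm' : (0:ℝ) < t := htm
    refine ⟨t, htm', ?_⟩
    rw [slope_def_field, div_neg_iff] at hts
    rcases hts with ⟨_, h⟩ | ⟨h, _⟩
    · exfalso; linarith
    · linarith
  obtain ⟨M, hM⟩ : ∃ M : ℝ, M = l t + l (-(t / 3)) - m - l 0 := ⟨_, rfl⟩
  obtain ⟨K, hK⟩ : ∃ K : ℝ, K = 3 * M / (-c) := ⟨_, rfl⟩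
  refine ⟨max (t ^ 2) (K ^ 2) + 1, by positivity, fun Bw hBw => ?_⟩
  set s : ℝ := Real.sqrt Bw with hs
  have hsB : Real.sqrt (max (t ^ 2) (K ^ 2) + 1) ≤ s := Real.sqrt_le_sqrt hBw
  have hst : t ≤ s := by
    have h1 : Real.sqrt (t ^ 2) ≤ Real.sqrt (max (t ^ 2) (K ^ 2) + 1) :=
      Real.sqrt_le_sqrt (by linarith [le_max_left (t ^ 2) (K ^ 2)])
    rw [Real.sqrt_sq_eq_abs] at h1
    have := le_abs_self t
    linarith [h1.trans hsB]
  have hsK : K < s := by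
    have h1 : Real.sqrt (K ^ 2) < Real.sqrt (max (t ^ 2) (K ^ 2) + 1) :=
      Real.sqrt_lt_sqrt (sq_nonneg K) (by linarith [le_max_right (t ^ 2) (K ^ 2)])
    rw [Real.sqrt_sq_eq_abs] at h1
    have := le_abs_self K
    linarith [h1.trans_le hsB]
  have hs0 : 0 < s := lt_of_lt_of_le ht0 hst
  rw [Set.disjoint_left]
  rintro w ⟨hwmem, hgmin⟩ ⟨_, hfmin⟩
  obtain ⟨hwl, hwu⟩ := hwmem
  have htmem : t ∈ Icc (-s) s := ⟨by linarith, hst⟩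
  have hlt' : l w ≤ l t := hfmin t htmem
  have hw0 : 0 < w := by
    by_contra h
    push_neg at h
    have hsu := support w
    nlinarith [mul_nonneg (le_of_lt hcneg) (neg_nonneg.mpr h)]
  by_cases h3 : 3 * w ≤ s
  · -- first case: `3w` is inside the interval
    have hv : w / 3 ∈ Icc (-s) s := ⟨by linarith, by linarith⟩
    have h1 := hgmin (w / 3) hv
    have e1 : 3 * (w / 3) = w := by ring
    rw [e1] at h1
    have h2 := hfmin (3 * w) ⟨by linarith, h3⟩
    have h4 := slope_le (-w) (-(w / 3)) (by linarith) (by linarith)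
    nlinarith [mul_pos hcneg hw0]
  · -- second case: `w > s/3` is large
    push_neg at h3
    have hv : t / 3 ∈ Icc (-s) s := ⟨by linarith, by linarith⟩
    have hg := hgmin (t / 3) hv
    have e1 : 3 * (t / 3) = t := by ring
    rw [e1] at hg
    have h5 := support (-w)
    have h6 := hmle (3 * w)
    have h7 : (-c) * w ≤ M := by nlinarith [hg, h5, h6, hM]
    have hKM : K * (-c) = 3 * M := by
      rw [hK, div_mul_cancel₀ _ (ne_of_gt hcneg)]
    nlinarith [mul_lt_mul_of_pos_right (show K < 3 * w by linarith) hcneg, h7, hKM]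
end
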